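/- arXiv:2509.16456 — 4 statements merged into one kernel-verified Lean document; each statement's English description precedes it below -/
import Mathlib

section
/- Mirror descent one-step bound: with π' the exponentiated update π'(a) = π(a)exp(ηQ(a))/Z of π, and Q bounded by 0 ≤ Q(a) ≤ r_max, for any probability distribution π* on the finite set A it holds that ⟨Q, π* - π⟩ ≤ (1/η)(KL(π* ‖ π) - KL(π* ‖ π')) + (η/2)·r_max². -/
section KeyScalar
open Real Set

lemma key_scalar (p t : ℝ) (hp0 : 0 ≤ p) (hp1 : p ≤ 1) (ht : 0 ≤ t) :
    Real.log (1 - p + p * Real.exp t) ≤ p * t + t ^ 2 / 2 := by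
  set F : ℝ → ℝ := fun x => p * x + x ^ 2 / 2 - Real.log (1 - p + p * Real.exp x) with hF
  have hD : ∀ x : ℝ, 0 < 1 - p + p * Real.exp x := by
    intro x
    rcases lt_or_eq_of_le hp1 with h | h
    · nlinarith [Real.exp_pos x]
    · nlinarith [Real.exp_pos x]
  have hderiv : ∀ x : ℝ, HasDerivAt F (p + x - p * Real.exp x / (1 - p + p * Real.exp x)) x := by
    intro x
    have h1 : HasDerivAt (fun x : ℝ => 1 - p + p * Real.exp x) (p * Real.exp x) x := by
      simpa using ((Real.hasDerivAt_exp x).const_mul p).const_add (1 - p)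
    have h2 : HasDerivAt (fun x : ℝ => Real.log (1 - p + p * Real.exp x))
        (p * Real.exp x / (1 - p + p * Real.exp x)) x := h1.log (hD x).ne'
    have h3 : HasDerivAt (fun x : ℝ => p * x + x ^ 2 / 2) (p + x) x := by
      have := ((hasDerivAt_pow 2 x).div_const 2).const_add (p * x)
      have h4 : HasDerivAt (fun y : ℝ => p * y) p x := by
        simpa using (hasDerivAt_id x).const_mul p
      exact (h4.add ((hasDerivAt_pow 2 x).div_const 2)).congr_deriv (by norm_num)
    exact h3.sub h2
  have hmono : MonotoneOn F (Ici (0:ℝ)) := by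
    apply monotoneOn_of_deriv_nonneg (convex_Ici 0)
    · exact fun x _ => ((hderiv x).differentiableAt).continuousAt.continuousWithinAt
    · intro x hx
      exact ((hderiv x).differentiableAt).differentiableWithinAt
    · intro x hx
      rw [(hderiv x).deriv]
      have hDx := hD x
      have hE := Real.exp_pos x
      have hmulE : Real.exp (-x) * Real.exp x = 1 := by
        rw [← Real.exp_add]; simp
      have hE1 : Real.exp x - 1 ≤ x * Real.exp x := by
        nlinarith [Real.add_one_le_exp (-x), Real.exp_pos x, hmulE]
      have hx0 : (0:ℝ) < x := by rw [interior_Ici] at hx; exact hx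
      have h5 : p * (1 - p) * (Real.exp x - 1) ≤ p * (1 - p) * (x * Real.exp x) :=
        mul_le_mul_of_nonneg_left hE1 (by nlinarith)
      rw [sub_nonneg, div_le_iff₀ hDx]
      nlinarith [h5, mul_nonneg hx0.le (sub_nonneg.2 hp1),
        mul_nonneg (mul_nonneg (mul_nonneg hp0 hp0) hx0.le) hE.le]
  have h0 : F 0 = 0 := by simp [hF]
  have := hmono (self_mem_Ici) (mem_Ici.mpr ht) ht
  rw [h0] at this
  simp only [hF] at this
  linarith

end KeyScalar

theorem stmt_3 {A : Type*} [Fintype A] (π πstar π' Q : A → ℝ) (η Z rmax : ℝ)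
    (hπ0 : ∀ a, 0 < π a) (hπ1 : ∑ a, π a = 1)
    (hs0 : ∀ a, 0 ≤ πstar a) (hs1 : ∑ a, πstar a = 1)
    (hη : 0 < η)
    (hQ : ∀ a, 0 ≤ Q a ∧ Q a ≤ rmax)
    (hZ : Z = ∑ b, π b * Real.exp (η * Q b))
    (hupd : ∀ a, π' a = π a * Real.exp (η * Q a) / Z) :
    ∑ a, Q a * (πstar a - π a) ≤
      (1 / η) * ((∑ a, πstar a * Real.log (πstar a / π a))
        - (∑ a, πstar a * Real.log (πstar a / π' a)))
      + (η / 2) * rmax ^ 2 := by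
  have hA : Nonempty A := by
    by_contra h
    rw [not_nonempty_iff] at h
    rw [Finset.univ_eq_empty, Finset.sum_empty] at hπ1
    norm_num at hπ1
  have hZpos : 0 < Z := by
    rw [hZ]
    exact Finset.sum_pos (fun b _ => mul_pos (hπ0 b) (Real.exp_pos _)) Finset.univ_nonempty
  set μ : ℝ := ∑ a, π a * Q a with hμ
  set S : ℝ := ∑ a, πstar a * Q a with hS
  -- KL difference identity
  have hKL : (∑ a, πstar a * Real.log (πstar a / π a))
      - (∑ a, πstar a * Real.log (πstar a / π' a)) = η * S - Real.log Z := by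
    rw [← Finset.sum_sub_distrib]
    have hterm : ∀ a ∈ Finset.univ,
        πstar a * Real.log (πstar a / π a) - πstar a * Real.log (πstar a / π' a)
        = πstar a * (η * Q a) - πstar a * Real.log Z := by
      intro a _
      rcases eq_or_lt_of_le (hs0 a) with h0 | h0
      · rw [← h0]; ring
      · have hπ'a : π' a = π a * Real.exp (η * Q a) / Z := hupd a
        have hexp : (0:ℝ) < Real.exp (η * Q a) := Real.exp_pos _
        rw [Real.log_div h0.ne' (hπ0 a).ne',
          Real.log_div h0.ne' (by rw [hπ'a]; exact (div_pos (mul_pos (hπ0 a) hexp) hZpos).ne'),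
          hπ'a, Real.log_div (mul_pos (hπ0 a) hexp).ne' hZpos.ne',
          Real.log_mul (hπ0 a).ne' hexp.ne', Real.log_exp]
        ring
    rw [Finset.sum_congr rfl hterm, Finset.sum_sub_distrib, ← Finset.sum_mul, hs1,
      one_mul, Finset.mul_sum]
    congr 1
    exact Finset.sum_congr rfl fun a _ => by ring
  -- key bound: log Z ≤ η μ + η² rmax² / 2
  obtain ⟨a0⟩ := hA
  have hr0 : 0 ≤ rmax := le_trans (hQ a0).1 (hQ a0).2
  have hkey : Real.log Z ≤ η * μ + η ^ 2 * rmax ^ 2 / 2 := by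
    rcases eq_or_lt_of_le hr0 with hr | hr
    · have hQ0 : ∀ a, Q a = 0 := fun a => le_antisymm (hr ▸ (hQ a).2) (hQ a).1
      have hZ1 : Z = 1 := by
        rw [hZ]; simp only [hQ0, mul_zero, Real.exp_zero, mul_one]; exact hπ1
      have hμ0 : μ = 0 := by
        rw [hμ]; simp [hQ0]
      rw [hZ1, Real.log_one, hμ0, ← hr]
      norm_num
    · have hμnn : 0 ≤ μ := Finset.sum_nonneg fun a _ => mul_nonneg (hπ0 a).le (hQ a).1
      have hμr : μ ≤ rmax := by
        calc μ ≤ ∑ a, π a * rmax :=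
              Finset.sum_le_sum fun a _ => mul_le_mul_of_nonneg_left (hQ a).2 (hπ0 a).le
          _ = rmax := by rw [← Finset.sum_mul, hπ1, one_mul]
      have hptw : ∀ a ∈ Finset.univ, π a * Real.exp (η * Q a)
          ≤ π a + (π a * Q a) * ((Real.exp (η * rmax) - 1) / rmax) := by
        intro a _
        have ha : (0:ℝ) ≤ 1 - Q a / rmax := by
          rw [sub_nonneg]; exact (div_le_one hr).mpr (hQ a).2
        have hb : (0:ℝ) ≤ Q a / rmax := div_nonneg (hQ a).1 hr.le
        have hab : (1 - Q a / rmax) + Q a / rmax = 1 := by ring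
        have hconv := convexOn_exp.2 (Set.mem_univ (0:ℝ)) (Set.mem_univ (η * rmax)) ha hb hab
        simp only [smul_eq_mul, mul_zero, zero_add, Real.exp_zero, mul_one] at hconv
        have harg : Q a / rmax * (η * rmax) = η * Q a := by
          field_simp
        rw [harg] at hconv
        have := mul_le_mul_of_nonneg_left hconv (hπ0 a).le
        calc π a * Real.exp (η * Q a)
            ≤ π a * ((1 - Q a / rmax) + Q a / rmax * Real.exp (η * rmax)) := this
          _ = π a + (π a * Q a) * ((Real.exp (η * rmax) - 1) / rmax) := by
              field_simp; ring
      have hZle : Z ≤ 1 - μ / rmax + (μ / rmax) * Real.exp (η * rmax) := by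
        calc Z ≤ ∑ a, (π a + (π a * Q a) * ((Real.exp (η * rmax) - 1) / rmax)) :=
              hZ ▸ Finset.sum_le_sum hptw
          _ = 1 + μ * ((Real.exp (η * rmax) - 1) / rmax) := by
              rw [Finset.sum_add_distrib, hπ1, ← Finset.sum_mul]
          _ = 1 - μ / rmax + (μ / rmax) * Real.exp (η * rmax) := by
              field_simp; ring
      have hlog : Real.log Z ≤ Real.log (1 - μ / rmax + (μ / rmax) * Real.exp (η * rmax)) :=
        Real.log_le_log hZpos hZle
      have hks := key_scalar (μ / rmax) (η * rmax) (div_nonneg hμnn hr.le)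
        ((div_le_one hr).mpr hμr) (mul_nonneg hη.le hr.le)
      calc Real.log Z ≤ (μ / rmax) * (η * rmax) + (η * rmax) ^ 2 / 2 :=
            le_trans hlog hks
        _ = η * μ + η ^ 2 * rmax ^ 2 / 2 := by field_simp
  -- assemble
  rw [hKL]
  have e1 : ∑ a, Q a * (πstar a - π a) = S - μ := by
    rw [hS, hμ, ← Finset.sum_sub_distrib]
    exact Finset.sum_congr rfl fun a _ => by ring
  have e2 : (1 / η) * (η * S - Real.log Z) = S - Real.log Z / η := by
    field_simp
  rw [e1, e2]
  have h3 : Real.log Z / η ≤ μ + η * rmax ^ 2 / 2 := by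
    rw [div_le_iff₀ hη]
    nlinarith [hkey]
  linarith
end

section
/- Under the Gibbs optimal policy π*(y) = π_ref(y)exp(r(y)/β)/Z of KL-regularized reward maximization, the reward can be recovered as r(y) = β·log(π*(y)/π_ref(y)) + β·log Z; hence for any two outputs y₁, y₂, the reward difference satisfies r(y₁) - r(y₂) = β·(log(π*(y₁)/π_ref(y₁)) - log(π*(y₂)/π_ref(y₂))). -/
theorem stmt_9 {Y : Type*} [Fintype Y] (πref r : Y → ℝ) (β Z : ℝ) (πstar : Y → ℝ)
    (hπref0 : ∀ y, 0 < πref y) (hβ : 0 < β)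
    (hZ : Z = ∑ y, πref y * Real.exp (r y / β))
    (hstar : ∀ y, πstar y = πref y * Real.exp (r y / β) / Z) :
    (∀ y, r y = β * Real.log (πstar y / πref y) + β * Real.log Z) ∧
      (∀ y₁ y₂, r y₁ - r y₂ =
        β * (Real.log (πstar y₁ / πref y₁) - Real.log (πstar y₂ / πref y₂))) := by
  have key : ∀ y, r y = β * Real.log (πstar y / πref y) + β * Real.log Z := by
    intro y
    have hZ0 : 0 < Z := by
      rw [hZ]
      exact Finset.sum_pos (fun i _ => mul_pos (hπref0 i) (Real.exp_pos _))
        ⟨y, Finset.mem_univ y⟩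
    have hratio : πstar y / πref y = Real.exp (r y / β) / Z := by
      rw [hstar y, div_div, mul_comm (πref y), mul_div_assoc,
        mul_comm Z (πref y), div_mul_eq_div_div,
        div_self (ne_of_gt (hπref0 y)), one_div, ← div_eq_mul_inv]
    rw [hratio, Real.log_div (Real.exp_ne_zero _) (ne_of_gt hZ0), Real.log_exp]
    field_simp
    ring
  refine ⟨key, fun y₁ y₂ => ?_⟩
  rw [key y₁, key y₂]; ring
end

section
/- Substituting the Gibbs-optimal policy reward parametrization into the Bradley–Terry model eliminates the partition function: if π(y) ∝ π_ref(y)exp(r(y)/β) with partition constant Z, then exp(r(y⁺))/(exp(r(y⁺)) + exp(r(y⁻))) = σ(β log(π(y⁺)/π_ref(y⁺)) - β log(π(y⁻)/π_ref(y⁻))). -/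
theorem stmt_11 {Y : Type*} [Fintype Y] (πref π r : Y → ℝ) (β Z : ℝ)
    (hπref0 : ∀ y, 0 < πref y) (hπref1 : ∑ y, πref y = 1)
    (hπ0 : ∀ y, 0 < π y) (hπ1 : ∑ y, π y = 1)
    (hβ : 0 < β) (hZ : 0 < Z)
    (hrel : ∀ y, π y = πref y * Real.exp (r y / β) / Z)
    (yp ym : Y) :
    Real.exp (r yp) / (Real.exp (r yp) + Real.exp (r ym)) =
      1 / (1 + Real.exp (-(β * Real.log (π yp / πref yp)
        - β * Real.log (π ym / πref ym)))) := by
  have key : ∀ y, β * Real.log (π y / πref y) = r y - β * Real.log Z := by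
    intro y
    have h1 : π y / πref y = Real.exp (r y / β) / Z := by
      rw [hrel y]; have := (hπref0 y).ne'; field_simp
    rw [h1, Real.log_div (Real.exp_ne_zero _) hZ.ne', Real.log_exp]
    field_simp
  rw [key yp, key ym]
  have h2 : r yp - β * Real.log Z - (r ym - β * Real.log Z) = r yp - r ym := by ring
  rw [h2, Real.exp_neg, Real.exp_sub]
  have e1 := Real.exp_pos (r yp)
  have e2 := Real.exp_pos (r ym)
  field_simp
end

section
/- Performance difference lemma for finite-horizon MDPs: for any two policies π, π' in a finite-horizon MDP with horizon H, deterministic initial state s₀, V₀^π(s₀) - V₀^{π'}(s₀) = Σ_{h=0}^{H-1} E_{s_h ∼ d_h^π} [ Σ_a Q_h^{π'}(s_h, a)·(π_h(a|s_h) - π'_h(a|s_h)) ], where d_h^π is the distribution of the state at step h under policy π starting from s₀. -/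
/-- Value function with `n` steps remaining, starting at step `h`. -/
noncomputable def Vaux {S A : Type*} [Fintype S] [Fintype A]
    (P : ℕ → S → A → S → ℝ) (r : ℕ → S → A → ℝ) (π : ℕ → S → A → ℝ) :
    ℕ → ℕ → S → ℝ
  | 0, _, _ => 0
  | n + 1, h, s => ∑ a, π h s a * (r h s a + ∑ s', P h s a s' * Vaux P r π n (h + 1) s')

/-- Step-`h` state-action value function in a horizon-`H` MDP. -/
noncomputable def Qfun {S A : Type*} [Fintype S] [Fintype A]
    (P : ℕ → S → A → S → ℝ) (r : ℕ → S → A → ℝ) (π : ℕ → S → A → ℝ)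
    (H h : ℕ) (s : S) (a : A) : ℝ :=
  r h s a + ∑ s', P h s a s' * Vaux P r π (H - (h + 1)) (h + 1) s'

/-- State visitation distribution at step `h` under policy `π` from initial state `s₀`. -/
noncomputable def visit {S A : Type*} [Fintype S] [Fintype A] [DecidableEq S]
    (P : ℕ → S → A → S → ℝ) (π : ℕ → S → A → ℝ) (s₀ : S) :
    ℕ → S → ℝ
  | 0, s => if s = s₀ then 1 else 0
  | h + 1, s' => ∑ s, ∑ a, visit P π s₀ h s * π h s a * P h s a s'

lemma pdl_aux {S A : Type*} [Fintype S] [Fintype A] [DecidableEq S]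
    (P : ℕ → S → A → S → ℝ) (r : ℕ → S → A → ℝ)
    (π π' : ℕ → S → A → ℝ) (s₀ : S) :
    ∀ n h, ∑ s, visit P π s₀ h s * (Vaux P r π n h s - Vaux P r π' n h s) =
      ∑ k ∈ Finset.range n, ∑ s, visit P π s₀ (h + k) s *
        ∑ a, (r (h + k) s a + ∑ s', P (h + k) s a s' *
            Vaux P r π' (n - k - 1) (h + k + 1) s') * (π (h + k) s a - π' (h + k) s a) := by
  intro n
  induction n with
  | zero => intro h; simp [Vaux]
  | succ n ih =>
    intro h
    have key : ∀ s, Vaux P r π (n+1) h s - Vaux P r π' (n+1) h s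
        = (∑ a, (r h s a + ∑ s', P h s a s' * Vaux P r π' n (h+1) s') * (π h s a - π' h s a))
          + ∑ a, π h s a * ∑ s', P h s a s' *
              (Vaux P r π n (h+1) s' - Vaux P r π' n (h+1) s') := by
      intro s
      simp only [Vaux]
      rw [← Finset.sum_sub_distrib, ← Finset.sum_add_distrib]
      refine Finset.sum_congr rfl fun a _ => ?_
      simp only [mul_sub, Finset.sum_sub_distrib]
      ring
    have step1 : ∑ s, visit P π s₀ h s * (Vaux P r π (n+1) h s - Vaux P r π' (n+1) h s)
        = (∑ s, visit P π s₀ h s *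
            ∑ a, (r h s a + ∑ s', P h s a s' * Vaux P r π' n (h+1) s') * (π h s a - π' h s a))
          + ∑ s, visit P π s₀ h s * ∑ a, π h s a * ∑ s', P h s a s' *
              (Vaux P r π n (h+1) s' - Vaux P r π' n (h+1) s') := by
      rw [← Finset.sum_add_distrib]
      exact Finset.sum_congr rfl fun s _ => by rw [key s, mul_add]
    have reorder : ∑ s, visit P π s₀ h s * ∑ a, π h s a * ∑ s', P h s a s' *
          (Vaux P r π n (h+1) s' - Vaux P r π' n (h+1) s')
        = ∑ s', visit P π s₀ (h+1) s' * (Vaux P r π n (h+1) s' - Vaux P r π' n (h+1) s') := by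
      have unf : ∀ s', visit P π s₀ (h+1) s' =
          ∑ s, ∑ a, visit P π s₀ h s * π h s a * P h s a s' := fun _ => rfl
      simp only [unf, Finset.mul_sum, Finset.sum_mul]
      conv_rhs => rw [Finset.sum_comm]
      apply Finset.sum_congr rfl; intro s _
      rw [Finset.sum_comm]
      apply Finset.sum_congr rfl; intro s' _
      apply Finset.sum_congr rfl; intro a _
      ring
    rw [step1, reorder, ih (h+1), Finset.sum_range_succ', add_comm]
    congr 1
    refine Finset.sum_congr rfl fun k _ => ?_
    have e1 : h + 1 + k = h + (k + 1) := by omega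
    have e2 : n - k - 1 = n + 1 - (k + 1) - 1 := by omega
    rw [e1, e2]

theorem stmt_15 {S A : Type*} [Fintype S] [Fintype A] [DecidableEq S]
    (P : ℕ → S → A → S → ℝ) (r : ℕ → S → A → ℝ)
    (π π' : ℕ → S → A → ℝ) (H : ℕ) (s₀ : S)
    (hP : ∀ h s a, (∀ s', 0 ≤ P h s a s') ∧ ∑ s', P h s a s' = 1)
    (hπ : ∀ h s, (∀ a, 0 ≤ π h s a) ∧ ∑ a, π h s a = 1)
    (hπ' : ∀ h s, (∀ a, 0 ≤ π' h s a) ∧ ∑ a, π' h s a = 1) :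
    Vaux P r π H 0 s₀ - Vaux P r π' H 0 s₀ =
      ∑ h ∈ Finset.range H, ∑ s, visit P π s₀ h s *
        ∑ a, Qfun P r π' H h s a * (π h s a - π' h s a) := by
  have := pdl_aux P r π π' s₀ H 0
  simp only [visit, ite_mul, one_mul, zero_mul, Finset.sum_ite_eq', Finset.mem_univ,
    if_true, zero_add] at this
  rw [this]
  refine Finset.sum_congr rfl fun k _ => Finset.sum_congr rfl fun s _ => ?_
  congr 1
end
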